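/- Let G be a finite multidigraph with an edge e* = (w*, v*) such that every vertex has in-degree at least 1, the vertex v* has in-degree at least 2, and G is k-out-regular for a positive integer k. Then the kernel of the surjective homomorphism ρ̄ : K(𝓛G, e*) → K(G, w*) induced by ρ is exactly the k-torsion subgroup of K(𝓛G, e*), i.e. {x ∈ K(𝓛G, e*) : k·x = 0}. -/

import Mathlib

open Finsupp

/-- The Laplacian of a multidigraph with edge tail map `t` and head map `h`,
as a linear endomorphism of the free abelian group on the vertices. -/
noncomputable def lap {V E : Type*} [Fintype E] [DecidableEq V] (t h : E → V) :
    (V →₀ ℤ) →ₗ[ℤ] (V →₀ ℤ) :=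
  Finsupp.lift (V →₀ ℤ) ℤ V fun v =>
    ∑ e : E, if t e = v then Finsupp.single (h e) (1 : ℤ) - Finsupp.single v 1 else 0

/-- The modified Laplacian `φ_{G,w}` : sends `v ↦ Δ_G v` for `v ≠ w`, and `w ↦ w`. -/
noncomputable def phiMod {V E : Type*} [Fintype E] [DecidableEq V] (t h : E → V) (w : V) :
    (V →₀ ℤ) →ₗ[ℤ] (V →₀ ℤ) :=
  Finsupp.lift (V →₀ ℤ) ℤ V fun v =>
    if v = w then Finsupp.single w 1 else lap t h (Finsupp.single v 1)

/-- Edges of the directed line graph: pairs `(e, f)` with `e⁺ = f⁻`. -/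
def LineEdge {V E : Type*} (t h : E → V) : Type _ := {p : E × E // h p.1 = t p.2}

instance {V E : Type*} [Fintype E] [DecidableEq V] (t h : E → V) :
    Fintype (LineEdge t h) := by
  unfold LineEdge; infer_instance

/-- in-degree of a vertex -/
def indeg {V E : Type*} [Fintype E] [DecidableEq V] (h : E → V) (v : V) : ℕ :=
  (Finset.univ.filter fun e => h e = v).card

/-- out-degree of a vertex -/
def outdeg {V E : Type*} [Fintype E] [DecidableEq V] (t : E → V) (v : V) : ℕ :=
  (Finset.univ.filter fun e => t e = v).card

/-- The modified target map `τ`: `e ↦ e⁺` for `e ≠ e*`, `e* ↦ 0`. -/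
noncomputable def tau {V E : Type*} [DecidableEq E] (h : E → V) (estar : E) :
    (E →₀ ℤ) →ₗ[ℤ] (V →₀ ℤ) :=
  Finsupp.lift (V →₀ ℤ) ℤ E fun e =>
    if e = estar then 0 else Finsupp.single (h e) 1

/-- The map `ρ`: `e ↦ Δ_G(w*) − v* − w* + e⁺` for `e ≠ e*`, `e* ↦ 0`,
where `w* = t e*` and `v* = h e*`. -/
noncomputable def rho {V E : Type*} [Fintype E] [DecidableEq V] [DecidableEq E]
    (t h : E → V) (estar : E) : (E →₀ ℤ) →ₗ[ℤ] (V →₀ ℤ) :=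
  Finsupp.lift (V →₀ ℤ) ℤ E fun e =>
    if e = estar then 0 else
      lap t h (Finsupp.single (t estar) 1) - Finsupp.single (h estar) 1
        - Finsupp.single (t estar) 1 + Finsupp.single (h e) 1

/-- The map `ρ₀`: `v ↦ Δ_G(w*) − v* − w* + v`. -/
noncomputable def rho0 {V E : Type*} [Fintype E] [DecidableEq V] (t h : E → V) (estar : E) :
    (V →₀ ℤ) →ₗ[ℤ] (V →₀ ℤ) :=
  Finsupp.lift (V →₀ ℤ) ℤ V fun v =>
    lap t h (Finsupp.single (t estar) 1) - Finsupp.single (h estar) 1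
      - Finsupp.single (t estar) 1 + Finsupp.single v 1

/-- The map `ψ`: `v ↦ Δ_G v` for `v ≠ w*`, and `w* ↦ Δ_G(w*) − v*`. -/
noncomputable def psi {V E : Type*} [Fintype E] [DecidableEq V] (t h : E → V) (estar : E) :
    (V →₀ ℤ) →ₗ[ℤ] (V →₀ ℤ) :=
  Finsupp.lift (V →₀ ℤ) ℤ V fun v =>
    if v = t estar then
      lap t h (Finsupp.single (t estar) 1) - Finsupp.single (h estar) 1
    else lap t h (Finsupp.single v 1)

/-- The map `σ`: `v ↦ Σ_{e⁻ = v} e`. -/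
noncomputable def sigmaMap {V E : Type*} [Fintype E] [DecidableEq V] (t : E → V) :
    (V →₀ ℤ) →ₗ[ℤ] (E →₀ ℤ) :=
  Finsupp.lift (E →₀ ℤ) ℤ V fun v =>
    ∑ e : E, if t e = v then Finsupp.single e (1 : ℤ) else 0

/-!
Let `σ v = ∑_{e⁻ = v} e` and let `τ₀ e = e⁺` (`Finsupp.mapDomain h`). Out-regularity gives
`Δ_G = τ₀ σ - k` and `Δ_{𝓛G} = σ τ₀ - k`, hence `σ Δ_G = Δ_{𝓛G} σ`. Since `ρ = ρ₀ ∘ τ` and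
`k x ≡ σ (τ x)` modulo the image of `φ_{𝓛G,e*}`, it suffices to show that for every `z ∈ ℤV`,
`ρ₀ z ∈ im φ_{G,w*}` iff `σ z ∈ im φ_{𝓛G,e*}`. Comparing degrees, both say that
`z - deg(z) v* = Δ_G y` for some `y` with `y(w*) = -deg z`. Going from `𝓛G` back to `G` means
dividing by `k`: as every vertex has an out-edge, `σ a = k b` forces `a = k m` and `b = σ m`.
-/

section General

variable {V E : Type*} [Fintype E] [DecidableEq V]

lemma lift_apply_single_one {X M : Type*} [AddCommGroup M] (f : X → M) (x : X) :
    Finsupp.lift M ℤ X f (single x 1) = f x := by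
  simp

lemma lhom_ext_single_one {X M : Type*} [AddCommGroup M] {F G : (X →₀ ℤ) →ₗ[ℤ] M}
    (H : ∀ x, F (single x 1) = G (single x 1)) : F = G :=
  Finsupp.lhom_ext' fun x => LinearMap.ext_ring (H x)

variable (t h : E → V)

lemma lap_single (v : V) :
    lap t h (single v 1) = ∑ e with t e = v, single (h e) 1 - (outdeg t v : ℤ) • single v 1 := by
  rw [lap, lift_apply_single_one, ← Finset.sum_filter, Finset.sum_sub_distrib, Finset.sum_const,
    outdeg, natCast_zsmul]

lemma degree_lap (y : V →₀ ℤ) : (lap t h y).degree = 0 := by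
  induction y using Finsupp.induction_linear with
  | zero => simp
  | add a b ha hb => simp [ha, hb]
  | single v c =>
    rw [← smul_single_one, map_zsmul, map_zsmul, lap_single, map_sub, map_sum, map_zsmul]
    simp [outdeg]

lemma phiMod_apply (w : V) (y : V →₀ ℤ) :
    phiMod t h w y = lap t h (y.erase w) + y w • single w 1 := by
  induction y using Finsupp.induction_linear with
  | zero => simp
  | add a b ha hb =>
    simp only [map_add, ha, hb, erase_add, Finsupp.add_apply, add_smul]; abel
  | single v c =>
    rw [← smul_single_one, map_zsmul, phiMod, lift_apply_single_one]
    by_cases hv : v = w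
    · subst hv; simp
    · simp [hv, Ne.symm hv, ← map_zsmul]

lemma mem_range_phiMod_iff (w : V) (z : V →₀ ℤ) :
    z ∈ LinearMap.range (phiMod t h w) ↔
      ∃ y : V →₀ ℤ, y w = 0 ∧ lap t h y + z.degree • single w 1 = z := by
  constructor
  · rintro ⟨y, rfl⟩
    refine ⟨y.erase w, by simp, ?_⟩
    rw [phiMod_apply, map_add, degree_lap, map_zsmul, degree_single, smul_eq_mul, mul_one,
      zero_add]
  · rintro ⟨y, hyw, hz⟩
    refine ⟨y + z.degree • single w 1, ?_⟩
    rw [phiMod_apply, smul_single_one, erase_add, erase_single, add_zero, Finsupp.add_apply, hyw,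
      single_eq_same, zero_add, ← hz]
    congr
    ext v; by_cases hv : v = w <;> simp [hv, hyw]

lemma sigmaMap_single (v : V) : sigmaMap t (single v 1) = ∑ e with t e = v, single e 1 := by
  rw [sigmaMap, lift_apply_single_one, Finset.sum_filter]

lemma sigmaMap_apply (y : V →₀ ℤ) (e : E) : sigmaMap t y e = y (t e) := by
  induction y using Finsupp.induction_linear with
  | zero => simp
  | add a b ha hb => simp [ha, hb]
  | single v c =>
    rw [← smul_single_one, map_zsmul, sigmaMap_single, Finsupp.smul_apply, finsetSum_apply]
    classical
    simp only [Finsupp.smul_apply, single_apply, Finset.sum_ite_eq', Finset.mem_filter,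
      Finset.mem_univ, true_and]
    by_cases hv : t e = v <;> simp [hv, Ne.symm]

end General

section Regular

variable {V E : Type*} [Fintype E] [DecidableEq V] (t h : E → V) {k : ℕ}

lemma tail_surjective_of_outdeg_eq (hreg : ∀ v, outdeg t v = k) (hk : 0 < k) :
    Function.Surjective t := by
  intro v
  obtain ⟨e, he⟩ := Finset.card_pos.1 (hreg v ▸ hk : 0 < outdeg t v)
  exact ⟨e, (Finset.mem_filter.1 he).2⟩

lemma exists_eq_sigmaMap_of_sigmaMap_eq_smul {c : ℤ} (hc : c ≠ 0) (ht : Function.Surjective t)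
    {a : V →₀ ℤ} {b : E →₀ ℤ} (hab : sigmaMap t a = c • b) :
    ∃ m, b = sigmaMap t m ∧ a = c • m := by
  have hdvd : ∀ v, c ∣ a v := fun v => by
    obtain ⟨e, rfl⟩ := ht v
    exact ⟨b e, by simpa [sigmaMap_apply] using congr($hab e)⟩
  set m := a.mapRange (· / c) (Int.zero_ediv c)
  have ham : a = c • m := ext fun v => by simp [m, Int.mul_ediv_cancel' (hdvd v)]
  refine ⟨m, smul_right_injective _ hc ?_, ham⟩
  change c • b = c • sigmaMap t m
  rw [← hab, ham, map_zsmul]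

lemma lap_eq_mapDomain_sigmaMap_sub (hreg : ∀ v, outdeg t v = k) (y : V →₀ ℤ) :
    lap t h y = (sigmaMap t y).mapDomain h - (k : ℤ) • y := by
  suffices lap t h = lmapDomain ℤ ℤ h ∘ₗ sigmaMap t - (k : ℤ) • LinearMap.id from
    LinearMap.congr_fun this y
  refine lhom_ext_single_one fun v => ?_
  simp [lap_single, sigmaMap_single, hreg, map_sum, mapDomain_single]

lemma degree_sigmaMap (hreg : ∀ v, outdeg t v = k) (y : V →₀ ℤ) :
    (sigmaMap t y).degree = k * y.degree := by
  induction y using Finsupp.induction_linear with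
  | zero => simp
  | add a b ha hb => simp [ha, hb, mul_add]
  | single v c =>
    rw [← smul_single_one, map_zsmul, map_zsmul, map_zsmul, sigmaMap_single, map_sum]
    simp [← hreg v, outdeg, mul_comm]

end Regular

section LineGraph

variable {V E : Type*} [Fintype E] [DecidableEq V] [DecidableEq E] (t h : E → V) {k : ℕ}

abbrev lineTail : LineEdge t h → E := fun p => p.1.1

abbrev lineHead : LineEdge t h → E := fun p => p.1.2

lemma sum_lineTail_eq {M : Type*} [AddCommMonoid M] (g : E → M) (e : E) :
    ∑ p with lineTail t h p = e, g (lineHead t h p) = ∑ f with t f = h e, g f :=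
  Finset.sum_bij' (fun p _ => p.1.2)
    (fun f hf => ⟨(e, f), (Finset.mem_filter.1 hf).2.symm⟩)
    (fun p hp => Finset.mem_filter.2
      ⟨Finset.mem_univ _, by rw [← (Finset.mem_filter.1 hp).2]; exact p.2.symm⟩)
    (fun _ _ => Finset.mem_filter.2 ⟨Finset.mem_univ _, rfl⟩)
    (fun p hp => Subtype.ext (Prod.ext (Finset.mem_filter.1 hp).2.symm rfl))
    (fun _ _ => rfl)
    (fun _ _ => rfl)

lemma outdeg_lineTail (e : E) : outdeg (lineTail t h) e = outdeg t (h e) := by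
  rw [outdeg, outdeg, Finset.card_eq_sum_ones, Finset.card_eq_sum_ones]
  exact sum_lineTail_eq t h (fun _ => 1) e

lemma lap_lineGraph (hreg : ∀ v, outdeg t v = k) (x : E →₀ ℤ) :
    lap (lineTail t h) (lineHead t h) x = sigmaMap t (x.mapDomain h) - (k : ℤ) • x := by
  suffices lap (lineTail t h) (lineHead t h) =
      sigmaMap t ∘ₗ lmapDomain ℤ ℤ h - (k : ℤ) • LinearMap.id from LinearMap.congr_fun this x
  refine lhom_ext_single_one fun e => ?_
  rw [LinearMap.sub_apply, LinearMap.comp_apply, lmapDomain_apply, mapDomain_single,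
    sigmaMap_single, LinearMap.smul_apply, LinearMap.id_apply, lap_single, outdeg_lineTail, hreg,
    sum_lineTail_eq t h (fun f => single f (1 : ℤ))]

lemma sigmaMap_lap (hreg : ∀ v, outdeg t v = k) (y : V →₀ ℤ) :
    sigmaMap t (lap t h y) = lap (lineTail t h) (lineHead t h) (sigmaMap t y) := by
  rw [lap_eq_mapDomain_sigmaMap_sub t h hreg, lap_lineGraph t h hreg, map_sub, map_zsmul]

end LineGraph

lemma tau_apply {V E : Type*} [DecidableEq E] (h : E → V) (estar : E) (x : E →₀ ℤ) :
    tau h estar x = (x.erase estar).mapDomain h := by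
  induction x using Finsupp.induction_linear with
  | zero => simp
  | add a b ha hb => rw [map_add, ha, hb, erase_add, mapDomain_add]
  | single e c =>
    rw [← smul_single_one, map_zsmul, tau, lift_apply_single_one]
    by_cases he : e = estar
    · subst he; simp
    · simp [he, mapDomain_single]

section Rho0

variable {V E : Type*} [Fintype E] [DecidableEq V] (t h : E → V) (estar : E)

lemma rho0_apply (z : V →₀ ℤ) :
    rho0 t h estar z = z + z.degree •
      (lap t h (single (t estar) 1) - single (h estar) 1 - single (t estar) 1) := by
  induction z using Finsupp.induction_linear with
  | zero => simp
  | add a b ha hb => rw [map_add, ha, hb, map_add, add_smul]; abel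
  | single v c =>
    rw [← smul_single_one, map_zsmul, rho0, lift_apply_single_one, map_zsmul, degree_single]
    module

lemma degree_rho0 (z : V →₀ ℤ) : (rho0 t h estar z).degree = -z.degree := by
  rw [rho0_apply, map_add, map_zsmul, map_sub, map_sub, degree_lap]
  simp only [degree_single, smul_eq_mul]
  ring

lemma rho0_mem_range_iff (z : V →₀ ℤ) :
    rho0 t h estar z ∈ LinearMap.range (phiMod t h (t estar)) ↔
      ∃ y : V →₀ ℤ, y (t estar) = -z.degree ∧
        lap t h y = z - z.degree • single (h estar) 1 := by
  rw [mem_range_phiMod_iff, degree_rho0, rho0_apply]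
  constructor
  · rintro ⟨y, hy, hlap⟩
    refine ⟨y - z.degree • single (t estar) 1, by simp [hy], ?_⟩
    rw [map_sub, map_zsmul]
    linear_combination (norm := module) hlap
  · rintro ⟨y, hy, hlap⟩
    refine ⟨y + z.degree • single (t estar) 1, by simp [hy], ?_⟩
    rw [map_add, map_zsmul, hlap]
    module

end Rho0

section Rho

variable {V E : Type*} [Fintype E] [DecidableEq V] [DecidableEq E] {t : E → V} (h : E → V)
  (estar : E) {k : ℕ}

lemma rho_eq_rho0_tau (x : E →₀ ℤ) : rho t h estar x = rho0 t h estar (tau h estar x) := by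
  suffices rho t h estar = rho0 t h estar ∘ₗ tau h estar from LinearMap.congr_fun this x
  refine lhom_ext_single_one fun e => ?_
  by_cases he : e = estar <;> simp [rho, rho0, tau, he]

lemma sigmaMap_mem_range_iff (hreg : ∀ v, outdeg t v = k) (hk : 0 < k) (z : V →₀ ℤ) :
    sigmaMap t z ∈ LinearMap.range (phiMod (lineTail t h) (lineHead t h) estar) ↔
      ∃ y : V →₀ ℤ, y (t estar) = -z.degree ∧
        lap t h y = z - z.degree • single (h estar) 1 := by
  rw [mem_range_phiMod_iff, degree_sigmaMap t hreg]
  constructor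
  · rintro ⟨x, hx, hlap⟩
    rw [lap_lineGraph t h hreg] at hlap
    have hσ : sigmaMap t (x.mapDomain h - z) = (k : ℤ) • (x - z.degree • single estar 1) := by
      rw [map_sub, ← hlap]
      module
    obtain ⟨m, hxm, hm⟩ := exists_eq_sigmaMap_of_sigmaMap_eq_smul t (by exact_mod_cast hk.ne')
      (tail_surjective_of_outdeg_eq t hreg hk) hσ
    refine ⟨m, ?_, ?_⟩
    · have := congr($hxm estar)
      simp only [Finsupp.sub_apply, hx, Finsupp.smul_apply, single_eq_same, sigmaMap_apply,
        smul_eq_mul, mul_one] at this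
      linarith
    · calc lap t h m = (sigmaMap t m).mapDomain h - (k : ℤ) • m :=
            lap_eq_mapDomain_sigmaMap_sub t h hreg m
        _ = (x - z.degree • single estar 1).mapDomain h - (x.mapDomain h - z) := by
            rw [← hxm, ← hm]
        _ = z - z.degree • single (h estar) 1 := by
            rw [mapDomain_sub, mapDomain_smul, mapDomain_single]
            abel
  · rintro ⟨y, hy, hlap⟩
    refine ⟨sigmaMap t y + z.degree • single estar 1, by simp [sigmaMap_apply, hy], ?_⟩
    rw [map_add, map_zsmul, ← sigmaMap_lap t h hreg, hlap, lap_lineGraph t h hreg,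
      mapDomain_single, map_sub, map_zsmul]
    module

lemma smul_mem_range_phiMod_lineGraph_iff (hreg : ∀ v, outdeg t v = k) (x : E →₀ ℤ) :
    (k : ℤ) • x ∈ LinearMap.range (phiMod (lineTail t h) (lineHead t h) estar) ↔
      sigmaMap t (tau h estar x) ∈
        LinearMap.range (phiMod (lineTail t h) (lineHead t h) estar) := by
  -- `φ_{𝓛G} x = σ (τ x) - k x + (k + 1) x(e*) e*` and `φ_{𝓛G} e* = e*`
  have hφ : phiMod (lineTail t h) (lineHead t h) estar (x - ((k + 1) * x estar) • single estar 1) =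
      sigmaMap t (tau h estar x) - (k : ℤ) • x := by
    rw [map_sub, map_zsmul, phiMod_apply, phiMod_apply, lap_lineGraph t h hreg, tau_apply,
      erase_single, map_zero, zero_add, single_eq_same, erase_eq_sub_single, ← smul_single_one]
    module
  have hmem := hφ ▸ LinearMap.mem_range_self _ _
  simpa only [sub_sub_cancel] using
    Submodule.sub_mem_iff_left _ hmem (x := sigmaMap t (tau h estar x))

lemma rho_mem_range_iff (hreg : ∀ v, outdeg t v = k) (hk : 0 < k) (x : E →₀ ℤ) :
    rho t h estar x ∈ LinearMap.range (phiMod t h (t estar)) ↔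
      (k : ℤ) • x ∈ LinearMap.range (phiMod (lineTail t h) (lineHead t h) estar) := by
  rw [rho_eq_rho0_tau, rho0_mem_range_iff, smul_mem_range_phiMod_lineGraph_iff h estar hreg,
    sigmaMap_mem_range_iff h estar hreg hk]

end Rho

theorem ker_rho_bar_eq_k_torsion_general
    {V E : Type*} [Fintype E] [DecidableEq V] [DecidableEq E]
    (t h : E → V) (estar : E) (k : ℕ) (hk : 0 < k)
    (hreg : ∀ v : V, outdeg t v = k) :
    ∀ ρbar : ((E →₀ ℤ) ⧸ LinearMap.range
          (phiMod (fun p : LineEdge t h => p.1.1) (fun p : LineEdge t h => p.1.2) estar)) →ₗ[ℤ]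
        ((V →₀ ℤ) ⧸ LinearMap.range (phiMod t h (t estar))),
      (∀ x : E →₀ ℤ,
          ρbar (Submodule.Quotient.mk x) = Submodule.Quotient.mk (rho t h estar x)) →
      LinearMap.ker ρbar =
        Submodule.torsionBy ℤ ((E →₀ ℤ) ⧸ LinearMap.range
          (phiMod (fun p : LineEdge t h => p.1.1) (fun p : LineEdge t h => p.1.2) estar)) (k : ℤ) := by
  intro ρbar hρbar
  ext q
  obtain ⟨x, rfl⟩ := Submodule.Quotient.mk_surjective _ q
  rw [LinearMap.mem_ker, hρbar x, Submodule.Quotient.mk_eq_zero,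
    Submodule.mem_torsionBy_iff, ← Submodule.Quotient.mk_smul, Submodule.Quotient.mk_eq_zero]
  exact rho_mem_range_iff h estar hreg hk x

/-- if moreover `G` is `k`-out-regular, the kernel of the induced
homomorphism `ρ̄ : K(𝓛G, e*) → K(G, w*)` is exactly the `k`-torsion subgroup. -/
theorem ker_rho_bar_eq_k_torsion
    {V E : Type*} [Fintype V] [Fintype E] [DecidableEq V] [DecidableEq E]
    (t h : E → V) (estar : E) (k : ℕ) (hk : 0 < k)
    (hreg : ∀ v : V, outdeg t v = k)
    (hin : ∀ v : V, 1 ≤ indeg h v) (hv : 2 ≤ indeg h (h estar)) :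
    ∀ ρbar : ((E →₀ ℤ) ⧸ LinearMap.range
          (phiMod (fun p : LineEdge t h => p.1.1) (fun p : LineEdge t h => p.1.2) estar)) →ₗ[ℤ]
        ((V →₀ ℤ) ⧸ LinearMap.range (phiMod t h (t estar))),
      (∀ x : E →₀ ℤ,
          ρbar (Submodule.Quotient.mk x) = Submodule.Quotient.mk (rho t h estar x)) →
      LinearMap.ker ρbar =
        Submodule.torsionBy ℤ ((E →₀ ℤ) ⧸ LinearMap.range
          (phiMod (fun p : LineEdge t h => p.1.1) (fun p : LineEdge t h => p.1.2) estar)) (k : ℤ) :=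
  ker_rho_bar_eq_k_torsion_general t h estar k hk hreg
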